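/- arXiv:1708.09398 — 3 statements merged into one kernel-verified Lean document; each statement's English description precedes it below -/
import Mathlib

section
/- Let S = {w_1, ..., w_s} ⊂ ℂⁿ be a unitary 2-design. Then the n×n×n matrix multiplication tensor MM_n equals I⊗I⊗I + (n³/s³)·Σ_{i,j,k pairwise distinct} |w_i⟩⟨w_j - w_i| ⊗ |w_j⟩⟨w_k - w_j| ⊗ |w_k⟩⟨w_i - w_k|, where the sum is over all ordered triples (i,j,k) of pairwise distinct indices in {1,...,s}. -/
open Matrix

/-- Outer product `|u⟩⟨v|` of complex vectors (conjugation on the bra). -/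
noncomputable def outer {n : ℕ} (u v : Fin n → ℂ) : Matrix (Fin n) (Fin n) ℂ :=
  Matrix.of fun i j => u i * (starRingEnd ℂ) (v j)

/-- Index space for an element of `(ℂ^{n×n})^{⊗3}` written in coordinates. -/
abbrev MMIdx (n : ℕ) := (Fin n × Fin n) × (Fin n × Fin n) × (Fin n × Fin n)

/-- The simple tensor `A ⊗ B ⊗ C` in coordinates. -/
def tpr {n : ℕ} (A B C : Matrix (Fin n) (Fin n) ℂ) : MMIdx n → ℂ :=
  fun x => A x.1.1 x.1.2 * B x.2.1.1 x.2.1.2 * C x.2.2.1 x.2.2.2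

/-- The `n×n` matrix multiplication tensor `MM_n = Σ_{a,b,c} E_{ab}⊗E_{bc}⊗E_{ca}`. -/
def MM (n : ℕ) : MMIdx n → ℂ :=
  fun x => if x.1.2 = x.2.1.1 ∧ x.2.1.2 = x.2.2.1 ∧ x.2.2.2 = x.1.1 then 1 else 0

/-! Triples with a repeated index contribute nothing, as one factor is then `|w_i⟩⟨0|`, so the
sum may run over all triples. Expanding the triple product of differences gives eight monomials,
each of which factors into a product of three single sums. Six of them contain a bare sum
`Σ w_i = 0`; the other two are products of entries of the frame matrix `F = Σ |w_i⟩⟨w_i|`, which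
the design property makes `(s/n) I`. These two surviving terms are `(s/n)³ MM_n` and
`-(s/n)³ I⊗I⊗I`. -/

theorem sum_ite_pairwise_ne_eq_sum {ι M : Type*} [Fintype ι] [DecidableEq ι] [AddCommMonoid M]
    (f : ι → ι → ι → M) (h₁ : ∀ i k, f i i k = 0) (h₂ : ∀ i j, f i j j = 0)
    (h₃ : ∀ i j, f i j i = 0) :
    ∑ i, ∑ j, ∑ k, (if i ≠ j ∧ j ≠ k ∧ i ≠ k then f i j k else 0) = ∑ i, ∑ j, ∑ k, f i j k := by
  refine Fintype.sum_congr _ _ fun i => Fintype.sum_congr _ _ fun j =>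
    Fintype.sum_congr _ _ fun k => ?_
  split_ifs with h
  · rfl
  · obtain rfl | rfl | rfl : i = j ∨ j = k ∨ i = k := by tauto
    exacts [(h₁ _ _).symm, (h₂ _ _).symm, (h₃ _ _).symm]

theorem sum_cyclic_sub_of_sum_eq_zero {ι R : Type*} [Fintype ι] [CommRing R]
    (α β γ p q r : ι → R) (hα : ∑ i, α i = 0) (hβ : ∑ j, β j = 0) (hγ : ∑ k, γ k = 0) :
    ∑ i, ∑ j, ∑ k, α i * β j * γ k * ((p j - p i) * (q k - q j) * (r i - r k)) =
      (∑ i, α i * r i) * (∑ j, β j * p j) * (∑ k, γ k * q k) -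
        (∑ i, α i * p i) * (∑ j, β j * q j) * (∑ k, γ k * r k) := by
  have expand : ∀ i j k, α i * β j * γ k * ((p j - p i) * (q k - q j) * (r i - r k)) =
      α i * r i * (β j * p j) * (γ k * q k) - α i * p i * (β j * q j) * (γ k * r k)
      - α i * (β j * p j) * (γ k * q k * r k) - α i * r i * (β j * p j * q j) * γ k
      - α i * p i * r i * β j * (γ k * q k) + α i * (β j * p j * q j) * (γ k * r k)
      + α i * p i * β j * (γ k * q k * r k) + α i * p i * r i * (β j * q j) * γ k := by
    intro i j k
    ring
  simp only [expand, Finset.sum_add_distrib, Finset.sum_sub_distrib, ← Finset.mul_sum,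
    ← Finset.sum_mul, hα, hβ, hγ]
  ring

section

variable {n : ℕ}

def cyclicTensor (F : Matrix (Fin n) (Fin n) ℂ) : MMIdx n → ℂ :=
  fun x => F x.1.1 x.2.2.2 * F x.2.1.1 x.1.2 * F x.2.2.1 x.2.1.2

theorem cyclicTensor_one : cyclicTensor (1 : Matrix (Fin n) (Fin n) ℂ) = MM n := by
  funext ⟨⟨a, d⟩, ⟨b, e⟩, ⟨u, f⟩⟩
  simp only [cyclicTensor, MM, one_apply]
  split_ifs <;> simp_all [eq_comm]

theorem cyclicTensor_smul (c : ℂ) (F : Matrix (Fin n) (Fin n) ℂ) :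
    cyclicTensor (c • F) = c ^ 3 • cyclicTensor F := by
  funext x
  simp only [cyclicTensor, Matrix.smul_apply, Pi.smul_apply, smul_eq_mul]
  ring

theorem tpr_smul (c : ℂ) (A B C : Matrix (Fin n) (Fin n) ℂ) :
    tpr (c • A) (c • B) (c • C) = c ^ 3 • tpr A B C := by
  funext x
  simp only [tpr, Matrix.smul_apply, Pi.smul_apply, smul_eq_mul]
  ring

theorem tpr_outer_sub_self_left (u v : Fin n → ℂ) (B C : Matrix (Fin n) (Fin n) ℂ) :
    tpr (outer u (v - v)) B C = 0 := by
  funext x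
  simp [tpr, outer]

theorem tpr_outer_sub_self_middle (u v : Fin n → ℂ) (A C : Matrix (Fin n) (Fin n) ℂ) :
    tpr A (outer u (v - v)) C = 0 := by
  funext x
  simp [tpr, outer]

theorem tpr_outer_sub_self_right (u v : Fin n → ℂ) (A B : Matrix (Fin n) (Fin n) ℂ) :
    tpr A B (outer u (v - v)) = 0 := by
  funext x
  simp [tpr, outer]

theorem sum_tpr_outer_cyclic_sub {s : ℕ} (w : Fin s → Fin n → ℂ) (hsum : ∑ i, w i = 0) :
    ∑ i, ∑ j, ∑ k,
        tpr (outer (w i) (w j - w i)) (outer (w j) (w k - w j)) (outer (w k) (w i - w k)) =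
      cyclicTensor (∑ i, outer (w i) (w i)) -
        tpr (∑ i, outer (w i) (w i)) (∑ i, outer (w i) (w i)) (∑ i, outer (w i) (w i)) := by
  have hzero : ∀ a, ∑ i, w i a = 0 := fun a => by simpa using congrFun hsum a
  funext ⟨⟨a, d⟩, ⟨b, e⟩, ⟨u, f⟩⟩
  let conjAt (c : Fin n) (i : Fin s) : ℂ := starRingEnd ℂ (w i c)
  calc _ = ∑ i, ∑ j, ∑ k, w i a * w j b * w k u *
          ((conjAt d j - conjAt d i) * (conjAt e k - conjAt e j) * (conjAt f i - conjAt f k)) := by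
        simp only [Finset.sum_apply]
        refine Fintype.sum_congr _ _ fun i => Fintype.sum_congr _ _ fun j =>
          Fintype.sum_congr _ _ fun k => ?_
        simp only [tpr, outer, of_apply, Pi.sub_apply, map_sub, conjAt]
        ring
    _ = _ := by
        rw [sum_cyclic_sub_of_sum_eq_zero _ _ _ _ _ _ (hzero a) (hzero b) (hzero u)]
        simp only [Pi.sub_apply, cyclicTensor, tpr, Matrix.sum_apply, outer, of_apply, conjAt]

end

theorem frame_eq_smul_one_of_design {n s : ℕ} (hs : 0 < s) (w : Fin s → Fin n → ℂ)
    (hdesign : (s : ℂ)⁻¹ • ∑ i, outer (w i) (w i) =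
      (n : ℂ)⁻¹ • (1 : Matrix (Fin n) (Fin n) ℂ)) :
    ∑ i, outer (w i) (w i) = ((s : ℂ) / n) • 1 := by
  rw [(inv_smul_eq_iff₀ (Nat.cast_ne_zero.2 hs.ne')).mp hdesign, smul_smul, div_eq_mul_inv]

theorem MM_eq_design_decomposition_general {n s : ℕ} (hn : 0 < n) (hs : 0 < s)
    (w : Fin s → Fin n → ℂ)
    (hsum : ∑ i, w i = 0)
    (hdesign : (s : ℂ)⁻¹ • ∑ i, outer (w i) (w i) =
      (n : ℂ)⁻¹ • (1 : Matrix (Fin n) (Fin n) ℂ)) :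
    MM n = tpr 1 1 1 +
      ((n : ℂ) ^ 3 / (s : ℂ) ^ 3) •
        ∑ i, ∑ j, ∑ k,
          if i ≠ j ∧ j ≠ k ∧ i ≠ k then
            tpr (outer (w i) (w j - w i)) (outer (w j) (w k - w j))
              (outer (w k) (w i - w k))
          else 0 := by
  have hcoeff : (n : ℂ) ^ 3 / (s : ℂ) ^ 3 * ((s : ℂ) / n) ^ 3 = 1 := by
    have : (n : ℂ) ≠ 0 := Nat.cast_ne_zero.2 hn.ne'
    have : (s : ℂ) ≠ 0 := Nat.cast_ne_zero.2 hs.ne'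
    field_simp
  rw [sum_ite_pairwise_ne_eq_sum _ ?_ ?_ ?_, sum_tpr_outer_cyclic_sub w hsum,
    frame_eq_smul_one_of_design hs w hdesign, cyclicTensor_smul, tpr_smul, cyclicTensor_one,
    ← smul_sub, smul_smul, hcoeff, one_smul]
  · abel
  exacts [fun _ _ => tpr_outer_sub_self_left _ _ _ _, fun _ _ => tpr_outer_sub_self_middle _ _ _ _,
    fun _ _ => tpr_outer_sub_self_right _ _ _ _]

/-- If `w_1, …, w_s` is a unitary 2-design in `ℂⁿ`, then
`MM_n = I⊗I⊗I + (n³/s³) Σ_{i,j,k distinct}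
|w_i⟩⟨w_j-w_i| ⊗ |w_j⟩⟨w_k-w_j| ⊗ |w_k⟩⟨w_i-w_k|`. -/
theorem MM_eq_design_decomposition {n s : ℕ} (hn : 0 < n) (hs : 0 < s)
    (w : Fin s → Fin n → ℂ) (hinj : Function.Injective w)
    (hsum : ∑ i, w i = 0)
    (hdesign : (s : ℂ)⁻¹ • ∑ i, outer (w i) (w i) =
      (n : ℂ)⁻¹ • (1 : Matrix (Fin n) (Fin n) ℂ)) :
    MM n = tpr 1 1 1 +
      ((n : ℂ) ^ 3 / (s : ℂ) ^ 3) •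
        ∑ i, ∑ j, ∑ k,
          if i ≠ j ∧ j ≠ k ∧ i ≠ k then
            tpr (outer (w i) (w j - w i)) (outer (w j) (w k - w j))
              (outer (w k) (w i - w k))
          else 0 :=
  MM_eq_design_decomposition_general hn hs w hsum hdesign
end

section
/- Let S = {w_1, ..., w_s} ⊂ ℂⁿ be a finite set of vectors with (1/s)·Σ_{v∈S} |v⟩⟨v| = (1/n)·I. Then the matrix multiplication tensor satisfies MM_n = (n³/s³)·Σ_{i,j,k=1}^{s} |w_i⟩⟨w_j| ⊗ |w_j⟩⟨w_k| ⊗ |w_k⟩⟨w_i|. -/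
open Matrix

/-- If `(1/s) Σ_i |w_i⟩⟨w_i| = (1/n) I`, then
`MM_n = (n³/s³) Σ_{i,j,k} |w_i⟩⟨w_j| ⊗ |w_j⟩⟨w_k| ⊗ |w_k⟩⟨w_i|`. -/
theorem MM_eq_twisted_sum {n s : ℕ} (hn : 0 < n) (hs : 0 < s)
    (w : Fin s → Fin n → ℂ)
    (hdesign : (s : ℂ)⁻¹ • ∑ i, outer (w i) (w i) =
      (n : ℂ)⁻¹ • (1 : Matrix (Fin n) (Fin n) ℂ)) :
    MM n = ((n : ℂ) ^ 3 / (s : ℂ) ^ 3) •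
      ∑ i, ∑ j, ∑ k,
        tpr (outer (w i) (w j)) (outer (w j) (w k)) (outer (w k) (w i)) := by
  have hn' : (n:ℂ) ≠ 0 := Nat.cast_ne_zero.mpr hn.ne'
  have hs' : (s:ℂ) ≠ 0 := Nat.cast_ne_zero.mpr hs.ne'
  have key : ∀ a b : Fin n, (∑ i, w i a * (starRingEnd ℂ) (w i b)) =
      ((s:ℂ)/(n:ℂ)) * (if a = b then 1 else 0) := by
    intro a b
    have h := congrFun (congrFun hdesign a) b
    simp only [Matrix.smul_apply, Matrix.sum_apply, outer, Matrix.of_apply,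
      Matrix.one_apply, smul_eq_mul] at h
    field_simp at h ⊢
    linear_combination h
  funext x
  obtain ⟨⟨a, b⟩, ⟨c, d⟩, ⟨e, f⟩⟩ := x
  simp only [MM, tpr, outer, Matrix.of_apply, Pi.smul_apply, Finset.sum_apply, smul_eq_mul]
  have factor :
      (∑ i, ∑ j, ∑ k, w i a * (starRingEnd ℂ) (w j b) *
        (w j c * (starRingEnd ℂ) (w k d)) * (w k e * (starRingEnd ℂ) (w i f))) =
      (∑ i, w i a * (starRingEnd ℂ) (w i f)) *
      ((∑ j, w j c * (starRingEnd ℂ) (w j b)) *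
       (∑ k, w k e * (starRingEnd ℂ) (w k d))) := by
    simp_rw [Finset.sum_mul_sum, Finset.mul_sum]
    refine Finset.sum_congr rfl fun i _ => Finset.sum_congr rfl fun j _ =>
      Finset.sum_congr rfl fun k _ => by ring
  rw [factor, key a f, key c b, key e d]
  simp only [show (a = f) ↔ (f = a) from eq_comm, show (c = b) ↔ (b = c) from eq_comm,
    show (e = d) ↔ (d = e) from eq_comm]
  by_cases h1 : b = c <;> by_cases h2 : d = e <;> by_cases h3 : f = a <;>
    simp [h1, h2, h3] <;> field_simp <;> ring
end

section
/- Let w₁ = (1,0), w₂ = (−1/2, √3/2), w₃ = (−1/2, −√3/2) in ℝ². Then the 2×2×2 matrix multiplication tensor MM_2 equals I⊗I⊗I + (8/27)·Σ_{i,j,k pairwise distinct in {1,2,3}} |w_i⟩⟨w_j − w_i| ⊗ |w_j⟩⟨w_k − w_j| ⊗ |w_k⟩⟨w_i − w_k|, a decomposition into 7 simple tensors. -/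
open Matrix

/-- Outer product `|u⟩⟨v|` of real vectors. -/
def outerR {n : ℕ} (u v : Fin n → ℝ) : Matrix (Fin n) (Fin n) ℝ :=
  Matrix.of fun i j => u i * v j

/-- The simple tensor `A ⊗ B ⊗ C` in coordinates. -/
def tprR {n : ℕ} (A B C : Matrix (Fin n) (Fin n) ℝ) : MMIdx n → ℝ :=
  fun x => A x.1.1 x.1.2 * B x.2.1.1 x.2.1.2 * C x.2.2.1 x.2.2.2

/-- The `n×n` matrix multiplication tensor `MM_n = Σ_{a,b,c} E_{ab}⊗E_{bc}⊗E_{ca}`. -/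
def MMR (n : ℕ) : MMIdx n → ℝ :=
  fun x => if x.1.2 = x.2.1.1 ∧ x.2.1.2 = x.2.2.1 ∧ x.2.2.2 = x.1.1 then 1 else 0

set_option maxHeartbeats 2000000 in
/-- Strassen's algorithm from the equilateral-triangle 2-design:
`MM_2 = I⊗I⊗I + (8/27) Σ_{i,j,k distinct} |w_i⟩⟨w_j-w_i| ⊗ |w_j⟩⟨w_k-w_j| ⊗ |w_k⟩⟨w_i-w_k|`,
a decomposition into 7 simple tensors. -/
theorem MM_two_triangle_decomposition
    (w : Fin 3 → Fin 2 → ℝ)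
    (hw0 : w 0 = ![1, 0])
    (hw1 : w 1 = ![-1/2, Real.sqrt 3 / 2])
    (hw2 : w 2 = ![-1/2, -(Real.sqrt 3 / 2)]) :
    MMR 2 = tprR 1 1 1 +
      (8/27 : ℝ) •
        ∑ i, ∑ j, ∑ k,
          if i ≠ j ∧ j ≠ k ∧ i ≠ k then
            tprR (outerR (w i) (w j - w i)) (outerR (w j) (w k - w j))
              (outerR (w k) (w i - w k))
          else 0 := by
  have h3 : Real.sqrt 3 * Real.sqrt 3 = 3 := Real.mul_self_sqrt (by norm_num)
  funext x
  obtain ⟨⟨a, b⟩, ⟨c, d⟩, ⟨e, f⟩⟩ := x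
  fin_cases a <;> fin_cases b <;> fin_cases c <;> fin_cases d <;> fin_cases e <;> fin_cases f <;>
  · simp only [MMR, tprR, outerR, Fin.sum_univ_three, Pi.add_apply, Pi.smul_apply,
      Pi.sub_apply, smul_eq_mul, hw0, hw1, hw2, Matrix.of_apply, Matrix.one_apply,
      ite_apply, Pi.zero_apply, ne_eq, Fin.isValue,
      show ((0:Fin 3) = 1) = False by simp, show ((1:Fin 3) = 0) = False by simp,
      show ((0:Fin 3) = 2) = False by simp, show ((2:Fin 3) = 0) = False by simp,
      show ((1:Fin 3) = 2) = False by simp, show ((2:Fin 3) = 1) = False by simp,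
      not_false_eq_true, and_self, if_true, and_true, true_and, if_false,
      Matrix.cons_val_zero, Matrix.cons_val_one, Matrix.head_cons]
    norm_num
    all_goals nlinarith [h3]
end
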